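/- Let n ≥ 1 and let F : ℝ^{2n} → ℝ be smooth and everywhere positive. Set u = F² and f = −2 ln F (so u = e^{−f}). Then for every x ∈ ℝ^{2n}: u(x)·P_f(x)(∇f(x)) = 4·P_F(x)(∇F(x)) + [ −(1/4)|∇f(x)|⁴ + (1/2)|∇f(x)|²·Δf(x) + D²f(x)[∇f(x), ∇f(x)] ]·u(x). -/

import Mathlib

/-!
Write `F = exp h` with `h = log F`, so that `f = -2 h` and `u = exp (2 h)`. The third
derivative of `exp h` is `exp h` times `D³h` plus lower-order terms built from `Dh` and `D²h`.
Contracted as in the P-form, the lower-order terms of the `J`-part cancel, because `J` is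
skew-adjoint (so `⟪∇h, J ∇h⟫ = 0`) and `D²h` is symmetric (so `Σ_b D²h[e_b, J e_b] = 0`).
This leaves `P_{exp h}(Z) = exp h · (P_h(Z) + Dh(Z) (|∇h|² + Δh) + 2 D²h(Z, ∇h))`; evaluating
it at `∇F = exp h · ∇h` and comparing with `P_f(∇f) = 4 P_h(∇h)` gives the identity.
-/

open MeasureTheory
open scoped RealInnerProductSpace

noncomputable section

/-- `ℝ^{2n}` identified with `ℂⁿ`: the `2n` real coordinates are indexed by pairs
`(a, t)` where `a` numbers the complex component and `t ∈ {0,1}` the real and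
imaginary part of that component. -/
abbrev Cn (n : ℕ) := EuclideanSpace ℝ (Fin n × Fin 2)

/-- The complex structure `J` on `ℝ^{2n} = ℂⁿ`, componentwise multiplication by `i`. -/
def Jop (n : ℕ) (x : Cn n) : Cn n :=
  WithLp.toLp 2 (fun p : Fin n × Fin 2 => ![ -x (p.1, 1), x (p.1, 0) ] p.2)

/-- The standard orthonormal basis of `ℝ^{2n}`. -/
def eC (n : ℕ) (p : Fin n × Fin 2) : Cn n := EuclideanSpace.single p 1

/-- Second Fréchet derivative as a bilinear form. -/
def D2C (n : ℕ) (g : Cn n → ℝ) (x X Y : Cn n) : ℝ := iteratedFDeriv ℝ 2 g x ![X, Y]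

/-- Third Fréchet derivative as a trilinear form. -/
def D3C (n : ℕ) (g : Cn n → ℝ) (x Z X Y : Cn n) : ℝ := iteratedFDeriv ℝ 3 g x ![Z, X, Y]

/-- Fourth Fréchet derivative as a quadrilinear form. -/
def D4C (n : ℕ) (g : Cn n → ℝ) (x Z X Y W : Cn n) : ℝ :=
  iteratedFDeriv ℝ 4 g x ![Z, X, Y, W]

/-- The Laplacian `Δg(x) = Σ_a D²g(x)[e_a, e_a]`. -/
def lapC (n : ℕ) (g : Cn n → ℝ) (x : Cn n) : ℝ := ∑ p, D2C n g x (eC n p) (eC n p)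

/-- The flat CR P-form
`P_g(x)(Z) = Σ_b D³g(x)[Z,e_b,e_b] + Σ_b D³g(x)[J Z, e_b, J e_b]`. -/
def PC (n : ℕ) (g : Cn n → ℝ) (x Z : Cn n) : ℝ :=
  (∑ b, D3C n g x Z (eC n b) (eC n b)) +
    ∑ b, D3C n g x (Jop n Z) (eC n b) (Jop n (eC n b))

/-- The flat CR-Paneitz operator
`C(g)(x) = Σ_{a,b} D⁴g[e_a,e_a,e_b,e_b] + Σ_{a,b} D⁴g[e_a, J e_a, e_b, J e_b]`. -/
def CPaneitz (n : ℕ) (g : Cn n → ℝ) (x : Cn n) : ℝ :=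
  (∑ a, ∑ b, D4C n g x (eC n a) (eC n a) (eC n b) (eC n b)) +
    ∑ a, ∑ b, D4C n g x (eC n a) (Jop n (eC n a)) (eC n b) (Jop n (eC n b))

/-- The unit cube `[0,1]^{2n}`. -/
def cubeC (n : ℕ) : Set (Cn n) := {x | ∀ p, x p ∈ Set.Icc (0 : ℝ) 1}

/-- The vector of `ℤ^{2n} ⊂ ℝ^{2n}` with integer coordinates `k`. -/
def lattC (n : ℕ) (k : Fin n × Fin 2 → ℤ) : Cn n := WithLp.toLp 2 (fun p => (k p : ℝ))

section ComplexStructure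

variable {n : ℕ}

theorem Jop_eC_zero (a : Fin n) : Jop n (eC n (a, 0)) = eC n (a, 1) := by
  ext ⟨b, t⟩
  fin_cases t <;> simp [Jop, eC, Prod.ext_iff]

theorem Jop_eC_one (a : Fin n) : Jop n (eC n (a, 1)) = -eC n (a, 0) := by
  ext ⟨b, t⟩
  fin_cases t <;> simp [Jop, eC, Prod.ext_iff]

variable (n) in
def Jlin : Cn n →ₗ[ℝ] Cn n where
  toFun := Jop n
  map_add' v w := by
    ext ⟨a, t⟩
    fin_cases t <;> simp [Jop, add_comm]
  map_smul' c v := by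
    ext ⟨a, t⟩
    fin_cases t <;> simp [Jop]

theorem inner_Jop_left (v w : Cn n) : ⟪Jop n v, w⟫ = -⟪v, Jop n w⟫ := by
  simp only [PiLp.inner_apply, RCLike.inner_apply, conj_trivial, Fintype.sum_prod_type,
    Fin.sum_univ_two, Jop]
  simp [← Finset.sum_neg_distrib]

theorem inner_Jop_self (v : Cn n) : ⟪v, Jop n v⟫ = 0 := by
  have := inner_Jop_left v v
  rw [real_inner_comm] at this
  linarith

theorem sum_inner_eC_mul (v : Cn n) (L : Cn n →ₗ[ℝ] ℝ) :
    ∑ b, ⟪v, eC n b⟫ * L (eC n b) = L v := by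
  conv_rhs => rw [← (EuclideanSpace.basisFun (Fin n × Fin 2) ℝ).sum_repr' v]
  simp [eC, real_inner_comm]

theorem sum_inner_Jop_eC_mul (v : Cn n) (L : Cn n →ₗ[ℝ] ℝ) :
    ∑ b, ⟪v, Jop n (eC n b)⟫ * L (eC n b) = -L (Jop n v) := by
  have hJ (b) : ⟪v, Jop n (eC n b)⟫ = -⟪Jop n v, eC n b⟫ := by rw [inner_Jop_left, neg_neg]
  simp only [hJ, neg_mul, Finset.sum_neg_distrib, sum_inner_eC_mul]

theorem sum_inner_eC_mul_Jop (v : Cn n) (L : Cn n →ₗ[ℝ] ℝ) :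
    ∑ b, ⟪v, eC n b⟫ * L (Jop n (eC n b)) = L (Jop n v) :=
  sum_inner_eC_mul v (L ∘ₗ Jlin n)

theorem sum_apply_eC_Jop_eC_eq_zero {B : Cn n →L[ℝ] Cn n →L[ℝ] ℝ} (hB : ∀ v w, B v w = B w v) :
    ∑ b, B (eC n b) (Jop n (eC n b)) = 0 := by
  simp [Fintype.sum_prod_type, Fin.sum_univ_two, Jop_eC_zero, Jop_eC_one, hB (eC n (_, 1))]

end ComplexStructure

section Calculus

variable {𝕜 E F : Type*} [NontriviallyNormedField 𝕜] [NormedAddCommGroup E] [NormedSpace 𝕜 E]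
  [NormedAddCommGroup F] [NormedSpace 𝕜 F]

theorem fderiv_iteratedFDeriv_apply {f : E → F} {x : E} {k : ℕ}
    (hf : DifferentiableAt 𝕜 (iteratedFDeriv 𝕜 k f) x) (m : Fin k → E) (v : E) :
    fderiv 𝕜 (fun y => iteratedFDeriv 𝕜 k f y m) x v =
      iteratedFDeriv 𝕜 (k + 1) f x (Fin.cons v m) := by
  rw [iteratedFDeriv_succ_apply_left, fderiv_continuousMultilinear_apply_const_apply hf]
  rfl

theorem ContDiff.differentiable_iteratedFDeriv_apply {n : WithTop ℕ∞} {f : E → F} {k : ℕ}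
    (hf : ContDiff 𝕜 n f) (hk : k < n) (m : Fin k → E) :
    Differentiable 𝕜 (fun y => iteratedFDeriv 𝕜 k f y m) :=
  (hf.differentiable_iteratedFDeriv hk).continuousMultilinear_apply_const m

theorem iteratedFDeriv_const_mul_apply {k : ℕ} {g : E → 𝕜} {x : E} (hg : ContDiffAt 𝕜 k g x)
    (c : 𝕜) (m : Fin k → E) :
    iteratedFDeriv 𝕜 k (fun y => c * g y) x m = c * iteratedFDeriv 𝕜 k g x m := by
  simpa using congrArg (· m) (iteratedFDeriv_const_smul_apply' (a := c) hg)

end Calculus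

section Exp

variable {E : Type*} [NormedAddCommGroup E] [NormedSpace ℝ E] {h : E → ℝ}

theorem iteratedFDeriv_two_exp_comp (hh : ContDiff ℝ 2 h) (x X Y : E) :
    iteratedFDeriv ℝ 2 (fun y => Real.exp (h y)) x ![X, Y] =
      Real.exp (h x) * (fderiv ℝ h x X * fderiv ℝ h x Y + iteratedFDeriv ℝ 2 h x ![X, Y]) := by
  have hd : Differentiable ℝ h := hh.differentiable (by norm_num)
  have hd1 := hh.differentiable_iteratedFDeriv_apply (k := 1) (by norm_num) ![Y]
  have hexp : (fun y => iteratedFDeriv ℝ 1 (fun y => Real.exp (h y)) y ![Y]) =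
      fun y => Real.exp (h y) * iteratedFDeriv ℝ 1 h y ![Y] := by
    funext y
    simp [iteratedFDeriv_one_apply, fderiv_exp (hd y)]
  rw [show (![X, Y] : Fin 2 → E) = Fin.cons X ![Y] from rfl,
    ← fderiv_iteratedFDeriv_apply (hh.exp.differentiable_iteratedFDeriv (by norm_num) x),
    ← fderiv_iteratedFDeriv_apply (hh.differentiable_iteratedFDeriv (by norm_num) x), hexp,
    fderiv_fun_mul (hd x).exp (hd1 x)]
  simp only [iteratedFDeriv_one_apply, Matrix.cons_val_fin_one, fderiv_exp (hd x), add_apply,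
    smul_apply, smul_eq_mul]
  ring

theorem iteratedFDeriv_three_exp_comp (hh : ContDiff ℝ 3 h) (x Z X Y : E) :
    iteratedFDeriv ℝ 3 (fun y => Real.exp (h y)) x ![Z, X, Y] =
      Real.exp (h x) * (fderiv ℝ h x Z * fderiv ℝ h x X * fderiv ℝ h x Y
        + fderiv ℝ (fderiv ℝ h) x Z X * fderiv ℝ h x Y
        + fderiv ℝ h x X * fderiv ℝ (fderiv ℝ h) x Z Y
        + fderiv ℝ h x Z * fderiv ℝ (fderiv ℝ h) x X Y
        + iteratedFDeriv ℝ 3 h x ![Z, X, Y]) := by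
  have hd : Differentiable ℝ h := hh.differentiable (by norm_num)
  have hdX := hh.differentiable_iteratedFDeriv_apply (k := 1) (by norm_num) ![X]
  have hdY := hh.differentiable_iteratedFDeriv_apply (k := 1) (by norm_num) ![Y]
  have hdXY := hh.differentiable_iteratedFDeriv_apply (k := 2) (by norm_num) ![X, Y]
  have hexp : (fun y => iteratedFDeriv ℝ 2 (fun y => Real.exp (h y)) y ![X, Y]) =
      fun y => Real.exp (h y) * (iteratedFDeriv ℝ 1 h y ![X] * iteratedFDeriv ℝ 1 h y ![Y]
        + iteratedFDeriv ℝ 2 h y ![X, Y]) := by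
    funext y
    simp [iteratedFDeriv_two_exp_comp (hh.of_le (by norm_num)), iteratedFDeriv_one_apply]
  rw [show (![Z, X, Y] : Fin 3 → E) = Fin.cons Z ![X, Y] from rfl,
    ← fderiv_iteratedFDeriv_apply (hh.exp.differentiable_iteratedFDeriv (by norm_num) x), hexp,
    ((hd x).hasFDerivAt.exp.fun_mul (((hdX x).hasFDerivAt.fun_mul (hdY x).hasFDerivAt).fun_add
      (hdXY x).hasFDerivAt)).fderiv]
  simp only [add_apply, smul_apply, smul_eq_mul,
    fderiv_iteratedFDeriv_apply (hh.differentiable_iteratedFDeriv (m := 1) (by norm_num) x),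
    fderiv_iteratedFDeriv_apply (hh.differentiable_iteratedFDeriv (m := 2) (by norm_num) x)]
  simp only [Nat.reduceAdd, iteratedFDeriv_one_apply, Matrix.cons_val_fin_one,
    Matrix.Fin.cons_vecCons, iteratedFDeriv_two_apply, Matrix.cons_val_zero, Matrix.cons_val_one]
  ring

end Exp

theorem gradient_comp_of_hasDerivAt {E : Type*} [NormedAddCommGroup E] [InnerProductSpace ℝ E]
    [CompleteSpace E] {g : E → ℝ} {φ : ℝ → ℝ} {φ' : ℝ} {x : E} (hφ : HasDerivAt φ φ' (g x))
    (hg : DifferentiableAt ℝ g x) : gradient (fun y => φ (g y)) x = φ' • gradient g x := by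
  apply HasGradientAt.gradient
  rw [hasGradientAt_iff_hasFDerivAt, map_smul, toDual_gradient]
  exact hφ.comp_hasFDerivAt x hg.hasFDerivAt

section PForm

variable {n : ℕ}

theorem D2C_eq_fderiv_fderiv (g : Cn n → ℝ) (x X Y : Cn n) :
    D2C n g x X Y = fderiv ℝ (fderiv ℝ g) x X Y := by
  simp [D2C, iteratedFDeriv_two_apply]

theorem sum_D3C_exp_comp_eC {h : Cn n → ℝ} (hh : ContDiff ℝ 3 h) (x Z : Cn n) :
    ∑ b, D3C n (fun y => Real.exp (h y)) x Z (eC n b) (eC n b) =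
      Real.exp (h x) * (∑ b, D3C n h x Z (eC n b) (eC n b)
        + ⟪gradient h x, Z⟫ * (‖gradient h x‖ ^ 2 + lapC n h x)
        + 2 * D2C n h x Z (gradient h x)) := by
  set G := gradient h x
  set B := fderiv ℝ (fderiv ℝ h) x
  have hGG : ∑ b, ⟪G, eC n b⟫ * ⟪G, eC n b⟫ = ‖G‖ ^ 2 := by
    simpa [real_inner_self_eq_norm_sq] using sum_inner_eC_mul G (innerSL ℝ G)
  have hBG : ∑ b, ⟪G, eC n b⟫ * B Z (eC n b) = B Z G := sum_inner_eC_mul G (B Z)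
  have hBG' : ∑ b, B Z (eC n b) * ⟪G, eC n b⟫ = B Z G :=
    (Finset.sum_congr rfl fun b _ => mul_comm _ _).trans hBG
  simp only [D3C, iteratedFDeriv_three_exp_comp hh, ← inner_gradient_left, lapC,
    D2C_eq_fderiv_fderiv, Finset.sum_add_distrib, mul_assoc, ← Finset.mul_sum]
  rw [hGG, hBG, hBG']
  ring

theorem sum_D3C_exp_comp_Jop {h : Cn n → ℝ} (hh : ContDiff ℝ 3 h) (x W : Cn n) :
    ∑ b, D3C n (fun y => Real.exp (h y)) x W (eC n b) (Jop n (eC n b)) =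
      Real.exp (h x) * ∑ b, D3C n h x W (eC n b) (Jop n (eC n b)) := by
  set G := gradient h x
  set B := fderiv ℝ (fderiv ℝ h) x
  have hGJG : ∑ b, ⟪G, eC n b⟫ * ⟪G, Jop n (eC n b)⟫ = 0 := by
    simpa [inner_Jop_self] using sum_inner_eC_mul_Jop G (innerSL ℝ G)
  have hBJG : ∑ b, ⟪G, eC n b⟫ * B W (Jop n (eC n b)) = B W (Jop n G) :=
    sum_inner_eC_mul_Jop G (B W)
  have hBJG' : ∑ b, B W (eC n b) * ⟪G, Jop n (eC n b)⟫ = -B W (Jop n G) :=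
    (Finset.sum_congr rfl fun b _ => mul_comm _ _).trans (sum_inner_Jop_eC_mul G (B W))
  have htrace : ∑ b, B (eC n b) (Jop n (eC n b)) = 0 :=
    sum_apply_eC_Jop_eC_eq_zero (hh.contDiffAt.isSymmSndFDerivAt (by norm_num))
  simp only [D3C, iteratedFDeriv_three_exp_comp hh, ← inner_gradient_left,
    Finset.sum_add_distrib, mul_assoc, ← Finset.mul_sum]
  rw [hGJG, hBJG, hBJG', htrace]
  ring

theorem PC_exp_comp {h : Cn n → ℝ} (hh : ContDiff ℝ 3 h) (x Z : Cn n) :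
    PC n (fun y => Real.exp (h y)) x Z =
      Real.exp (h x) * (PC n h x Z + ⟪gradient h x, Z⟫ * (‖gradient h x‖ ^ 2 + lapC n h x)
        + 2 * D2C n h x Z (gradient h x)) := by
  rw [PC, PC, sum_D3C_exp_comp_eC hh, sum_D3C_exp_comp_Jop hh]
  ring

theorem PC_smul (g : Cn n → ℝ) (x Z : Cn n) (c : ℝ) : PC n g x (c • Z) = c * PC n g x Z := by
  have hJ : Jop n (c • Z) = c • Jop n Z := (Jlin n).map_smul c Z
  simp [PC, D3C, iteratedFDeriv_succ_apply_left, hJ, Finset.mul_sum, mul_add]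

theorem PC_const_mul {g : Cn n → ℝ} (hg : ContDiff ℝ 3 g) (c : ℝ) (x Z : Cn n) :
    PC n (fun y => c * g y) x Z = c * PC n g x Z := by
  simp [PC, D3C, iteratedFDeriv_const_mul_apply hg.contDiffAt, Finset.mul_sum, mul_add]

theorem lapC_const_mul {g : Cn n → ℝ} (hg : ContDiff ℝ 2 g) (c : ℝ) (x : Cn n) :
    lapC n (fun y => c * g y) x = c * lapC n g x := by
  simp only [lapC, D2C, iteratedFDeriv_const_mul_apply hg.contDiffAt, Finset.mul_sum]

theorem D2C_const_mul {g : Cn n → ℝ} (hg : ContDiff ℝ 2 g) (c : ℝ) (x X Y : Cn n) :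
    D2C n (fun y => c * g y) x X Y = c * D2C n g x X Y :=
  iteratedFDeriv_const_mul_apply hg.contDiffAt c _

end PForm

theorem cr_P_change_of_variable_general (n : ℕ) (F : Cn n → ℝ)
    (hF : ContDiff ℝ (⊤ : ℕ∞) F) (hFpos : ∀ x, 0 < F x)
    (u f : Cn n → ℝ) (hu : u = fun x => (F x) ^ 2)
    (hf : f = fun x => -2 * Real.log (F x)) (x : Cn n) :
    u x * PC n f x (gradient f x) =
      4 * PC n F x (gradient F x)
      + (-(1 / 4) * ‖gradient f x‖ ^ 4 + (1 / 2) * ‖gradient f x‖ ^ 2 * lapC n f x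
          + D2C n f x (gradient f x) (gradient f x)) * u x := by
  obtain ⟨h, hh, rfl⟩ : ∃ h : Cn n → ℝ, ContDiff ℝ 3 h ∧ F = fun y => Real.exp (h y) :=
    ⟨fun y => Real.log (F y),
      (hF.log fun y => (hFpos y).ne').of_le (ENat.natCast_le_of_coe_top_le_withTop le_rfl 3),
      funext fun y => (Real.exp_log (hFpos y)).symm⟩
  simp only [Real.log_exp] at hf
  subst hu hf
  have hd : DifferentiableAt ℝ h x := hh.differentiable (by norm_num) x
  have hgrad_f : gradient (fun y => -2 * h y) x = (-2 : ℝ) • gradient h x :=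
    gradient_comp_of_hasDerivAt
      (by simpa only [mul_one] using (hasDerivAt_id' (h x)).const_mul (-2 : ℝ)) hd
  have hgrad_F : gradient (fun y => Real.exp (h y)) x = Real.exp (h x) • gradient h x :=
    gradient_comp_of_hasDerivAt (Real.hasDerivAt_exp _) hd
  have hh2 : ContDiff ℝ 2 h := hh.of_le (by norm_num)
  rw [hgrad_f, hgrad_F, PC_const_mul hh, PC_smul, PC_smul, PC_exp_comp hh, lapC_const_mul hh2,
    D2C_const_mul hh2, real_inner_self_eq_norm_sq]
  simp only [D2C_eq_fderiv_fderiv, map_smul, smul_apply, smul_eq_mul, norm_neg, norm_smul,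
    Real.norm_ofNat]
  ring

/-- CR change-of-variable identity for the P-function,
`u·P_f(∇f) = 4 P_F(∇F) + [ −¼|∇f|⁴ + ½|∇f|²Δf + ∇²f(∇f,∇f) ]·u`
where `u = F²`, `f = −2 ln F`. -/
theorem cr_P_change_of_variable (n : ℕ) (hn : 1 ≤ n) (F : Cn n → ℝ)
    (hF : ContDiff ℝ (⊤ : ℕ∞) F) (hFpos : ∀ x, 0 < F x)
    (u f : Cn n → ℝ) (hu : u = fun x => (F x) ^ 2)
    (hf : f = fun x => -2 * Real.log (F x)) (x : Cn n) :
    u x * PC n f x (gradient f x) =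
      4 * PC n F x (gradient F x)
      + (-(1 / 4) * ‖gradient f x‖ ^ 4 + (1 / 2) * ‖gradient f x‖ ^ 2 * lapC n f x
          + D2C n f x (gradient f x) (gradient f x)) * u x :=
  cr_P_change_of_variable_general n F hF hFpos u f hu hf x
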